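/- Fix a pure unit octonion Z and a pure unit octonion ν orthogonal to Z. Define σ : 𝕆^{p+q} → 𝕆^{p+q} by σ(X_1,…,X_p,X_{p+1},…,X_{p+q}) = (X_1,…,X_p, conj(X_{p+1}·ν),…, conj(X_{p+q}·ν)). Then σ ∘ j^{(p,q)}_Z = j^{(p+q,0)}_Z ∘ σ, where j^{(p,q)}_Z(X_1,…,X_{p+q}) = (Z·X_1,…,Z·X_p, X_{p+1}·Z,…,X_{p+q}·Z) and j^{(p+q,0)}_Z(X_1,…,X_{p+q}) = (Z·X_1,…,Z·X_{p+q}). -/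

import Mathlib

/-- The octonions, built by the Cayley–Dickson construction on the quaternions. -/
def Oct : Type := Quaternion ℝ × Quaternion ℝ

noncomputable instance : AddCommGroup Oct := inferInstanceAs (AddCommGroup (Quaternion ℝ × Quaternion ℝ))
noncomputable instance : Module ℝ Oct := inferInstanceAs (Module ℝ (Quaternion ℝ × Quaternion ℝ))

namespace Oct

/-- Cayley–Dickson multiplication. -/
noncomputable def mul (x y : Oct) : Oct :=
  (x.1 * y.1 - star y.2 * x.2, y.2 * x.1 + x.2 * star y.1)

/-- Octonion conjugation. -/
noncomputable def conj (x : Oct) : Oct := (star x.1, -x.2)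

/-- Real part. -/
def re (x : Oct) : ℝ := x.1.re

/-- The standard inner product `⟨x, y⟩ = Re (x ⬝ conj y)`. -/
noncomputable def inner (x y : Oct) : ℝ := re (mul x (conj y))

/-- Squared norm. -/
noncomputable def normSq (x : Oct) : ℝ := inner x x

/-- A pure (purely imaginary) octonion is one with zero real part. -/
def IsPure (x : Oct) : Prop := re x = 0

end Oct

/-! Writing `W = conj Y` and using `conj (a b) = conj b · conj a` together with `conj x = -x` for
pure `x`, the identity `conj ((Y Z) ν) = Z · conj (Y ν)` becomes `ν (Z W) = -Z (ν W)`. This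
follows from the polarized left alternative law `x (y w) + y (x w) = (x y + y x) w`, since
orthogonal pure octonions anticommute. -/

namespace Oct

@[simp] lemma fst_add (x y : Oct) : (x + y).1 = x.1 + y.1 := rfl
@[simp] lemma snd_add (x y : Oct) : (x + y).2 = x.2 + y.2 := rfl
@[simp] lemma fst_neg (x : Oct) : (-x).1 = -x.1 := rfl
@[simp] lemma snd_neg (x : Oct) : (-x).2 = -x.2 := rfl
@[simp] lemma fst_zero : (0 : Oct).1 = 0 := rfl
@[simp] lemma snd_zero : (0 : Oct).2 = 0 := rfl
@[simp] lemma fst_mul (x y : Oct) : (mul x y).1 = x.1 * y.1 - star y.2 * x.2 := rfl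
@[simp] lemma snd_mul (x y : Oct) : (mul x y).2 = y.2 * x.1 + x.2 * star y.1 := rfl
@[simp] lemma fst_conj (x : Oct) : (conj x).1 = star x.1 := rfl
@[simp] lemma snd_conj (x : Oct) : (conj x).2 = -x.2 := rfl

@[ext] lemma ext {x y : Oct} (h1 : x.1 = y.1) (h2 : x.2 = y.2) : x = y := Prod.ext h1 h2

lemma mul_neg (x y : Oct) : mul x (-y) = -mul x y := by
  ext : 1 <;> simp <;> abel

lemma neg_mul (x y : Oct) : mul (-x) y = -mul x y := by
  ext : 1 <;> simp <;> abel

lemma zero_mul (x : Oct) : mul 0 x = 0 := by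
  ext : 1 <;> simp

lemma conj_mul (x y : Oct) : conj (mul x y) = mul (conj y) (conj x) := by
  ext : 1 <;> simp

lemma IsPure.conj_eq_neg {x : Oct} (hx : IsPure x) : conj x = -x :=
  Oct.ext (Quaternion.star_eq_neg.mpr hx) rfl

lemma mul_mul_add_mul_mul (x y w : Oct) :
    mul x (mul y w) + mul y (mul x w) = mul (mul x y + mul y x) w := by
  ext <;>
    simp only [fst_add, snd_add, fst_mul, snd_mul, Quaternion.re_mul, Quaternion.imI_mul,
      Quaternion.imJ_mul, Quaternion.imK_mul, Quaternion.re_sub, Quaternion.imI_sub,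
      Quaternion.imJ_sub, Quaternion.imK_sub, Quaternion.re_add, Quaternion.imI_add,
      Quaternion.imJ_add, Quaternion.imK_add, Quaternion.re_star, Quaternion.imI_star,
      Quaternion.imJ_star, Quaternion.imK_star] <;>
    ring

lemma mul_add_mul_swap_eq_zero {x y : Oct} (hx : IsPure x) (hy : IsPure y)
    (hxy : inner x y = 0) : mul x y + mul y x = 0 := by
  simp only [IsPure, re] at hx hy
  simp only [inner, re, fst_mul, snd_conj, fst_conj, Quaternion.re_sub, Quaternion.re_mul,
    Quaternion.re_star, Quaternion.imI_star, Quaternion.imJ_star, Quaternion.imK_star,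
    Quaternion.re_neg, Quaternion.imI_neg, Quaternion.imJ_neg, Quaternion.imK_neg, hx, hy] at hxy
  ext <;>
    simp only [fst_add, snd_add, fst_zero, snd_zero, fst_mul, snd_mul, Quaternion.re_mul,
      Quaternion.imI_mul, Quaternion.imJ_mul, Quaternion.imK_mul, Quaternion.re_sub,
      Quaternion.imI_sub, Quaternion.imJ_sub, Quaternion.imK_sub, Quaternion.re_add,
      Quaternion.imI_add, Quaternion.imJ_add, Quaternion.imK_add, Quaternion.re_star,
      Quaternion.imI_star, Quaternion.imJ_star, Quaternion.imK_star, Quaternion.re_zero,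
      Quaternion.imI_zero, Quaternion.imJ_zero, Quaternion.imK_zero, hx, hy]
  · -- `re (x y + y x) = -2 ⟨x, y⟩` for pure `x`, `y`
    linear_combination (-2) * hxy
  all_goals ring

lemma conj_mul_mul_eq_mul_conj_mul {Z ν : Oct} (hZ : IsPure Z) (hν : IsPure ν)
    (horth : inner Z ν = 0) (Y : Oct) :
    conj (mul (mul Y Z) ν) = mul Z (conj (mul Y ν)) := by
  have anticomm : mul ν (mul Z (conj Y)) = -mul Z (mul ν (conj Y)) := by
    refine eq_neg_of_add_eq_zero_right ?_
    rw [mul_mul_add_mul_mul, mul_add_mul_swap_eq_zero hZ hν horth, zero_mul]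
  rw [conj_mul, conj_mul, conj_mul, hZ.conj_eq_neg, hν.conj_eq_neg]
  simp only [Oct.neg_mul, Oct.mul_neg, neg_neg, anticomm]

end Oct

theorem sigma_intertwines_j_general (p q : ℕ) (Z ν : Oct)
    (hZ : Oct.IsPure Z) (hν : Oct.IsPure ν)
    (horth : Oct.inner Z ν = 0)
    (σ : (Fin (p + q) → Oct) → (Fin (p + q) → Oct))
    (hσ : ∀ (X : Fin (p + q) → Oct) (i : Fin (p + q)),
      σ X i = if (i : ℕ) < p then X i else Oct.conj (Oct.mul (X i) ν))
    (jpq jpq0 : (Fin (p + q) → Oct) → (Fin (p + q) → Oct))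
    (hjpq : ∀ (X : Fin (p + q) → Oct) (i : Fin (p + q)),
      jpq X i = if (i : ℕ) < p then Oct.mul Z (X i) else Oct.mul (X i) Z)
    (hjpq0 : ∀ (X : Fin (p + q) → Oct) (i : Fin (p + q)),
      jpq0 X i = Oct.mul Z (X i)) :
    σ ∘ jpq = jpq0 ∘ σ := by
  funext X i
  simp only [Function.comp_apply, hσ, hjpq, hjpq0]
  split_ifs
  · rfl
  · exact Oct.conj_mul_mul_eq_mul_conj_mul hZ hν horth (X i)

/-- The map  intertwines  and . -/
theorem sigma_intertwines_j (p q : ℕ) (hpq : 1 ≤ p + q) (Z ν : Oct)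
    (hZ : Oct.IsPure Z) (hν : Oct.IsPure ν)
    (hZ1 : Oct.normSq Z = 1) (hν1 : Oct.normSq ν = 1) (horth : Oct.inner Z ν = 0)
    (σ : (Fin (p + q) → Oct) → (Fin (p + q) → Oct))
    (hσ : ∀ (X : Fin (p + q) → Oct) (i : Fin (p + q)),
      σ X i = if (i : ℕ) < p then X i else Oct.conj (Oct.mul (X i) ν))
    (jpq jpq0 : (Fin (p + q) → Oct) → (Fin (p + q) → Oct))
    (hjpq : ∀ (X : Fin (p + q) → Oct) (i : Fin (p + q)),
      jpq X i = if (i : ℕ) < p then Oct.mul Z (X i) else Oct.mul (X i) Z)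
    (hjpq0 : ∀ (X : Fin (p + q) → Oct) (i : Fin (p + q)),
      jpq0 X i = Oct.mul Z (X i)) :
    σ ∘ jpq = jpq0 ∘ σ :=
  sigma_intertwines_j_general p q Z ν hZ hν horth σ hσ jpq jpq0 hjpq hjpq0
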